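/- Let E be a directed graph, H a hereditary subset of E⁰, and let H̄ denote the saturated closure of H (the smallest hereditary saturated set containing H). If w is the base of a closed path in E and w ∈ H̄, then w ∈ H. -/
import Mathlib


/-- A set of vertices is hereditary: the range of any edge whose source lies in the
set also lies in the set. -/
def Hered {V E : Type*} (s r : E → V) (H : Set V) : Prop :=
  ∀ e : E, s e ∈ H → r e ∈ H

/-- A set of vertices is saturated: any regular vertex (emitting a nonempty finite
set of edges) all of whose edges have range in the set belongs to the set. -/
def Satur {V E : Type*} (s r : E → V) (H : Set V) : Prop :=
  ∀ u : V, {e : E | s e = u}.Nonempty → {e : E | s e = u}.Finite →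
    (∀ e : E, s e = u → r e ∈ H) → u ∈ H

/-- The saturated closure of `H`: the smallest hereditary saturated set containing
`H`. -/
def SatClosure {V E : Type*} (s r : E → V) (H : Set V) : Set V :=
  ⋂₀ {S : Set V | H ⊆ S ∧ Hered s r S ∧ Satur s r S}

namespace AuxSatClosure

open Classical in
/-- Iterative saturation stages. -/
noncomputable def It {V E : Type*} (s r : E → V) (H : Set V) : ℕ → Set V
  | 0 => H
  | n + 1 => It s r H n ∪ {u : V | {e : E | s e = u}.Nonempty ∧ {e : E | s e = u}.Finite ∧
      ∀ e : E, s e = u → r e ∈ It s r H n}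

lemma It_mono {V E : Type*} (s r : E → V) (H : Set V) : Monotone (It s r H) := by
  apply monotone_nat_of_le_succ
  intro n
  exact Set.subset_union_left

lemma hered_It {V E : Type*} (s r : E → V) (H : Set V) (hH : Hered s r H) :
    ∀ n, Hered s r (It s r H n) := by
  intro n
  induction n with
  | zero => exact hH
  | succ n ih =>
    intro e he
    rcases he with h | h
    · exact Or.inl (ih e h)
    · exact Or.inl (h.2.2 e rfl)

lemma chain_mem {V E : Type*} (s r : E → V) {H : Set V} (hH : Hered s r H)
    {m : ℕ} (es : Fin (m + 1) → E)
    (hch : ∀ i : Fin m, r (es i.castSucc) = s (es i.succ))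
    (h0 : r (es 0) ∈ H) : ∀ i, r (es i) ∈ H := by
  intro i
  induction i using Fin.induction with
  | zero => exact h0
  | succ i ih =>
    apply hH
    rw [← hch i]
    exact ih

lemma mem_It_of_closed {V E : Type*} (s r : E → V) (H : Set V) (hH : Hered s r H) (w : V)
    (hclosed : ∃ (n : ℕ) (es : Fin (n + 1) → E),
      s (es 0) = w ∧ r (es (Fin.last n)) = w ∧
      ∀ i : Fin n, r (es i.castSucc) = s (es i.succ)) :
    ∀ n, w ∈ It s r H n → w ∈ H := by
  intro n
  induction n with
  | zero => exact fun h => h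
  | succ n ih =>
    intro hw
    rcases hw with h | h
    · exact ih h
    · obtain ⟨m, es, hs0, hlast, hch⟩ := hclosed
      have h0 : r (es 0) ∈ It s r H n := h.2.2 (es 0) hs0
      have := chain_mem s r (hered_It s r H hH n) es hch h0 (Fin.last m)
      rw [hlast] at this
      exact ih this

end AuxSatClosure

/-- If `H` is a hereditary set of vertices and `w` is the base of a closed path lying
in the saturated closure of `H`, then `w ∈ H`. -/
theorem base_of_closed_path_mem_of_mem_satClosure
    {V E : Type*} (s r : E → V) (H : Set V) (hH : Hered s r H) (w : V)
    (hclosed : ∃ (n : ℕ) (es : Fin (n + 1) → E),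
      s (es 0) = w ∧ r (es (Fin.last n)) = w ∧
      ∀ i : Fin n, r (es i.castSucc) = s (es i.succ))
    (hw : w ∈ SatClosure s r H) : w ∈ H := by
  classical
  set S : Set V := ⋃ n, AuxSatClosure.It s r H n with hS
  have hsub : H ⊆ S := Set.subset_iUnion (AuxSatClosure.It s r H) 0
  have hhered : Hered s r S := by
    intro e he
    obtain ⟨n, hn⟩ := Set.mem_iUnion.mp he
    exact Set.mem_iUnion.mpr ⟨n, AuxSatClosure.hered_It s r H hH n e hn⟩
  have hsat : Satur s r S := by
    intro u hne hfin hr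
    set f : E → ℕ := fun e => if h : ∃ n, r e ∈ AuxSatClosure.It s r H n then h.choose else 0
      with hf
    set N : ℕ := hfin.toFinset.sup f with hN
    have hall : ∀ e : E, s e = u → r e ∈ AuxSatClosure.It s r H N := by
      intro e he
      have hre : ∃ n, r e ∈ AuxSatClosure.It s r H n := Set.mem_iUnion.mp (hr e he)
      have h1 : r e ∈ AuxSatClosure.It s r H (f e) := by
        simp only [hf, dif_pos hre]
        exact hre.choose_spec
      have h2 : f e ≤ N := Finset.le_sup (hfin.mem_toFinset.mpr he)
      exact AuxSatClosure.It_mono s r H h2 h1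
    exact Set.mem_iUnion.mpr ⟨N + 1, Or.inr ⟨hne, hfin, hall⟩⟩
  have hwS : w ∈ S := hw S ⟨hsub, hhered, hsat⟩
  obtain ⟨n, hn⟩ := Set.mem_iUnion.mp hwS
  exact AuxSatClosure.mem_It_of_closed s r H hH w hclosed n hn
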